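/- Let C ∈ S_y(ŷ₋) and let A be the unique element of S(y ∩ N(C)) with C ⊆ A. Then |S((y⊖C) ∩ N(C))| < |S(y ∩ N(C))| if and only if A = C. -/

import Mathlib

/-- The "segment graph" of a labeling `y`: vertices adjacent in `G` with equal labels. -/
def segGraph {V : Type*} (G : SimpleGraph V) (y : V → ℕ) : SimpleGraph V where
  Adj i j := G.Adj i j ∧ y i = y j
  symm := ⟨fun _ _ h => ⟨h.1.symm, h.2.symm⟩⟩
  loopless := ⟨fun i h => G.loopless.irrefl i h.1⟩

/-- The connected components of the subgraph of `H` induced on the vertex set `S`,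
viewed as subsets of the ambient vertex type. -/
def comps {V : Type*} (H : SimpleGraph V) (S : Set V) : Set (Set V) :=
  { C | ∃ K : (H.induce S).ConnectedComponent, C = Subtype.val '' K.supp }

/-- `S(y ∩ W)`: connected components of the segment graph of `y` on `F(y) ∩ W`. -/
def segComps {V : Type*} (G : SimpleGraph V) (y : V → ℕ) (W : Set V) : Set (Set V) :=
  comps (segGraph G y) ({i | y i ≠ 0} ∩ W)

/-- The closed neighborhood `N(C)` of a vertex set `C`. -/
def nbhd {V : Type*} (G : SimpleGraph V) (C : Set V) : Set V :=
  C ∪ {i | ∃ j ∈ C, G.Adj i j}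

/-- The labeling `y ⊖ C`: agrees with `y` off `C` and is `0` on `C`. -/
noncomputable def removeLbl {V : Type*} (y : V → ℕ) (C : Set V) : V → ℕ :=
  Cᶜ.indicator y

/-- The false negative mask `M₋`. -/
def fnMask {V : Type*} (y yhat : V → ℕ) : Set V := {i | y i ≠ 0 ∧ yhat i = 0}

/-- The false positive mask `M₊`. -/
def fpMask {V : Type*} (y yhat : V → ℕ) : Set V := {i | yhat i ≠ 0 ∧ y i = 0}

/-- `S_y(ŷ₋)`: components of the graph on `M₋` with edges `{i,j} ∈ E(G)` such that `y i = y j`. -/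
def maskCompsNeg {V : Type*} (G : SimpleGraph V) (y yhat : V → ℕ) : Set (Set V) :=
  comps (segGraph G y) (fnMask y yhat)

/-- `S_y(ŷ₊)`: components of the graph on `M₊` with edges `{i,j} ∈ E(G)` such that `ŷ i = ŷ j`. -/
def maskCompsPos {V : Type*} (G : SimpleGraph V) (y yhat : V → ℕ) : Set (Set V) :=
  comps (segGraph G yhat) (fpMask y yhat)

/-- `C` is negatively critical (w.r.t. labeling `y`):
`|S(y ∩ N(C))| ≠ |S((y⊖C) ∩ N(C))|`. -/
def negCritical {V : Type*} (G : SimpleGraph V) (y : V → ℕ) (C : Set V) : Prop :=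
  Nat.card ↥(segComps G y (nbhd G C))
    ≠ Nat.card ↥(segComps G (removeLbl y C) (nbhd G C))

/-- `C` is positively critical (w.r.t. prediction `yhat`):
`|S(ŷ ∩ N(C))| ≠ |S((ŷ⊖C) ∩ N(C))|`. -/
def posCritical {V : Type*} (G : SimpleGraph V) (yhat : V → ℕ) (C : Set V) : Prop :=
  Nat.card ↥(segComps G yhat (nbhd G C))
    ≠ Nat.card ↥(segComps G (removeLbl yhat C) (nbhd G C))

section Aux

open SimpleGraph

variable {V : Type*}

/-- The number of components (as sets) equals the number of connected components. -/
lemma card_comps (H : SimpleGraph V) (S : Set V) :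
    Nat.card (comps H S) = Nat.card ((H.induce S).ConnectedComponent) := by
  refine (Nat.card_congr (Equiv.ofBijective
    (fun K : (H.induce S).ConnectedComponent =>
      (⟨Subtype.val '' K.supp, ⟨K, rfl⟩⟩ : comps H S)) ⟨?_, ?_⟩)).symm
  · intro K₁ K₂ h
    have h' : Subtype.val '' K₁.supp = Subtype.val '' K₂.supp := congrArg Subtype.val h
    exact ConnectedComponent.supp_injective
      ((Set.image_injective.mpr Subtype.val_injective) h')
  · rintro ⟨D, ⟨K, hK⟩⟩
    exact ⟨K, Subtype.ext hK.symm⟩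

/-- Transfer a walk avoiding the component `K₀` (which contains all of `C`) from
the graph induced on `S` to the graph induced on `S \ C`. -/
lemma reach_transfer (H : SimpleGraph V) (S C : Set V)
    (K₀ : (H.induce S).ConnectedComponent)
    (hC : ∀ v : ↥S, (v : V) ∈ C → v ∈ K₀.supp)
    {u v : ↥S} (w : (H.induce S).Walk u v) :
    (H.induce S).connectedComponentMk u ≠ K₀ →
    ∃ (hu' : (u : V) ∈ S \ C) (hv' : (v : V) ∈ S \ C),
      (H.induce (S \ C)).Reachable ⟨u, hu'⟩ ⟨v, hv'⟩ := by
  induction w with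
  | @nil u =>
    intro hu
    have hu' : (u : V) ∈ S \ C :=
      ⟨u.2, fun hc => hu ((ConnectedComponent.mem_supp_iff _ _).1 (hC u hc))⟩
    exact ⟨hu', hu', Reachable.refl _⟩
  | @cons a b c h p ih =>
    intro hu
    have hb : (H.induce S).connectedComponentMk b ≠ K₀ := by
      have : (H.induce S).connectedComponentMk a = (H.induce S).connectedComponentMk b :=
        ConnectedComponent.eq.mpr h.reachable
      rwa [← this]
    obtain ⟨hb', hc', r⟩ := ih hb
    have ha' : (a : V) ∈ S \ C :=
      ⟨a.2, fun hc => hu ((ConnectedComponent.mem_supp_iff _ _).1 (hC a hc))⟩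
    have hadj : (H.induce (S \ C)).Adj ⟨a, ha'⟩ ⟨b, hb'⟩ := h
    exact ⟨ha', hc', hadj.reachable.trans r⟩

/-- The key counting lemma: removing a subset `C` of the component `K₀` decreases
the number of connected components iff `C` is all of `K₀`. -/
lemma key_lemma [Finite V] (H : SimpleGraph V) (S C : Set V)
    (K₀ : (H.induce S).ConnectedComponent)
    (hCA : C ⊆ Subtype.val '' K₀.supp) :
    Nat.card ((H.induce (S \ C)).ConnectedComponent)
      < Nat.card ((H.induce S).ConnectedComponent) ↔ Subtype.val '' K₀.supp = C := by
  classical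
  -- the inclusion homomorphism
  let f : H.induce (S \ C) →g H.induce S :=
    ⟨fun v => ⟨v.1, v.2.1⟩, fun {a b} h => h⟩
  let π : (H.induce (S \ C)).ConnectedComponent → (H.induce S).ConnectedComponent :=
    fun D => D.map f
  have hCsupp : ∀ v : ↥S, (v : V) ∈ C → v ∈ K₀.supp := by
    intro v hv
    obtain ⟨w, hw, hval⟩ := hCA hv
    have : v = w := Subtype.ext hval.symm
    rwa [this]
  -- π is a bijection from the non-fiber onto components other than K₀
  have hbij : Function.Bijective
      (fun D : {D : (H.induce (S \ C)).ConnectedComponent // π D ≠ K₀} =>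
        (⟨π D.1, D.2⟩ : {K : (H.induce S).ConnectedComponent // K ≠ K₀})) := by
    constructor
    · rintro ⟨D₁, h₁⟩ ⟨D₂, h₂⟩ h
      have hππ : π D₁ = π D₂ := congrArg Subtype.val h
      obtain ⟨u₁, hu₁⟩ := D₁.exists_rep
      obtain ⟨u₂, hu₂⟩ := D₂.exists_rep
      have hu₁ : (H.induce (S \ C)).connectedComponentMk u₁ = D₁ := hu₁
      have hu₂ : (H.induce (S \ C)).connectedComponentMk u₂ = D₂ := hu₂
      have hmk : (H.induce S).connectedComponentMk (f u₁)
          = (H.induce S).connectedComponentMk (f u₂) := by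
        have e1 : π D₁ = (H.induce S).connectedComponentMk (f u₁) := by
          rw [← hu₁]; rfl
        have e2 : π D₂ = (H.induce S).connectedComponentMk (f u₂) := by
          rw [← hu₂]; rfl
        rw [← e1, ← e2, hππ]
      obtain ⟨wlk⟩ := ConnectedComponent.eq.1 hmk
      have hne : (H.induce S).connectedComponentMk (f u₁) ≠ K₀ := by
        intro hcon
        apply h₁
        rw [← hu₁]
        exact hcon
      obtain ⟨hu', hv', r⟩ := reach_transfer H S C K₀ hCsupp wlk hne
      have e1 : (⟨((f u₁ : ↥S) : V), hu'⟩ : ↥(S \ C)) = u₁ := Subtype.ext rfl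
      have e2 : (⟨((f u₂ : ↥S) : V), hv'⟩ : ↥(S \ C)) = u₂ := Subtype.ext rfl
      have : (H.induce (S \ C)).connectedComponentMk u₁
          = (H.induce (S \ C)).connectedComponentMk u₂ := by
        rw [← e1, ← e2]
        exact ConnectedComponent.eq.2 r
      apply Subtype.ext
      show D₁ = D₂
      rw [← hu₁, ← hu₂]
      exact this
    · rintro ⟨K, hK⟩
      obtain ⟨v, hv⟩ := K.exists_rep
      have hv : (H.induce S).connectedComponentMk v = K := hv
      have hvC : (v : V) ∉ C := by
        intro hc
        apply hK
        rw [← hv, ← (ConnectedComponent.mem_supp_iff _ _).1 (hCsupp v hc)]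
      have hmem : (v : V) ∈ S \ C := ⟨v.2, hvC⟩
      have hπ : π ((H.induce (S \ C)).connectedComponentMk ⟨(v : V), hmem⟩) = K := by
        have : f ⟨(v : V), hmem⟩ = v := Subtype.ext rfl
        show (H.induce S).connectedComponentMk (f ⟨(v : V), hmem⟩) = K
        rw [this, hv]
      refine ⟨⟨(H.induce (S \ C)).connectedComponentMk ⟨(v : V), hmem⟩, ?_⟩, ?_⟩
      · rw [hπ]; exact hK
      · exact Subtype.ext hπ
  have e2 : {D : (H.induce (S \ C)).ConnectedComponent // π D ≠ K₀}
      ≃ {K : (H.induce S).ConnectedComponent // K ≠ K₀} := Equiv.ofBijective _ hbij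
  -- counting
  haveI : Unique {K : (H.induce S).ConnectedComponent // K = K₀} :=
    ⟨⟨⟨K₀, rfl⟩⟩, fun a => Subtype.ext a.2⟩
  have h1 : Nat.card ((H.induce S).ConnectedComponent)
      = 1 + Nat.card {K : (H.induce S).ConnectedComponent // K ≠ K₀} := by
    rw [← Nat.card_congr (Equiv.sumCompl (fun K : (H.induce S).ConnectedComponent => K = K₀)),
      Nat.card_sum, Nat.card_unique]
  have h2 : Nat.card ((H.induce (S \ C)).ConnectedComponent)
      = Nat.card {D : (H.induce (S \ C)).ConnectedComponent // π D = K₀}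
        + Nat.card {K : (H.induce S).ConnectedComponent // K ≠ K₀} := by
    rw [← Nat.card_congr
      (Equiv.sumCompl (fun D : (H.induce (S \ C)).ConnectedComponent => π D = K₀)),
      Nat.card_sum, Nat.card_congr e2]
  have hfiber : Nat.card {D : (H.induce (S \ C)).ConnectedComponent // π D = K₀} = 0
      ↔ Subtype.val '' K₀.supp = C := by
    rw [Nat.card_eq_zero]
    constructor
    · rintro (hempty | hinf)
      · -- fiber empty ⟹ A = C
        apply Set.Subset.antisymm
        · rintro a ⟨w, hw, rfl⟩
          by_contra haC
          have hmem : (w : V) ∈ S \ C := ⟨w.2, haC⟩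
          refine hempty.false ⟨(H.induce (S \ C)).connectedComponentMk ⟨(w : V), hmem⟩, ?_⟩
          show (H.induce S).connectedComponentMk (f ⟨(w : V), hmem⟩) = K₀
          have : f ⟨(w : V), hmem⟩ = w := Subtype.ext rfl
          rw [this]
          exact hw
        · intro c hc
          obtain ⟨w, hw, hval⟩ := hCA hc
          exact ⟨w, hw, hval⟩
      · exact absurd hinf (not_infinite_iff_finite.mpr (Finite.of_injective _ Subtype.val_injective))
    · intro hAC
      left
      constructor
      rintro ⟨D, hD⟩
      obtain ⟨u, hu⟩ := D.exists_rep
      have hu : (H.induce (S \ C)).connectedComponentMk u = D := hu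
      have : π D = (H.induce S).connectedComponentMk (f u) := by rw [← hu]; rfl
      rw [this] at hD
      have : (u : V) ∈ Subtype.val '' K₀.supp := ⟨f u, hD, rfl⟩
      rw [hAC] at this
      exact u.2.2 this
  rw [h1, h2, ← hfiber]
  omega

lemma comps_congr {H₁ H₂ : SimpleGraph V} {S : Set V}
    (h : H₁.induce S = H₂.induce S) : comps H₁ S = comps H₂ S := by
  unfold comps
  rw [h]

end Aux

/-- Let `C ∈ S_y(ŷ₋)` and let `A` be the unique element of
`S(y ∩ N(C))` with `C ⊆ A`.  Then `|S((y⊖C) ∩ N(C))| < |S(y ∩ N(C))|` iff `A = C`. -/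
theorem stmt11 {V : Type*} [Fintype V] (G : SimpleGraph V) (y yhat : V → ℕ)
    (C : Set V) (hC : C ∈ maskCompsNeg G y yhat)
    (A : Set V) (hA : A ∈ segComps G y (nbhd G C)) (hCA : C ⊆ A) :
    Nat.card ↥(segComps G (removeLbl y C) (nbhd G C))
        < Nat.card ↥(segComps G y (nbhd G C)) ↔ A = C := by
  classical
  set N := nbhd G C with hN
  set S : Set V := {i | y i ≠ 0} ∩ N with hS
  obtain ⟨K₀, hK₀⟩ := hA
  -- rewrite the removed-label side as components of the original segment graph on S \ C
  have hset : {i | removeLbl y C i ≠ 0} ∩ N = S \ C := by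
    ext i
    simp only [removeLbl, Set.indicator_apply, Set.mem_compl_iff, Set.mem_inter_iff,
      Set.mem_setOf_eq, Set.mem_diff, hS]
    by_cases hi : i ∈ C <;> simp [hi]
  have hind : (segGraph G (removeLbl y C)).induce (S \ C) = (segGraph G y).induce (S \ C) := by
    ext ⟨a, ha⟩ ⟨b, hb⟩
    show (G.Adj a b ∧ removeLbl y C a = removeLbl y C b) ↔ (G.Adj a b ∧ y a = y b)
    have ea : removeLbl y C a = y a := by
      simp [removeLbl, Set.indicator_apply, ha.2]
    have eb : removeLbl y C b = y b := by
      simp [removeLbl, Set.indicator_apply, hb.2]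
    rw [ea, eb]
  have hred : segComps G (removeLbl y C) N = comps (segGraph G y) (S \ C) := by
    unfold segComps
    rw [hset]
    exact comps_congr hind
  have hred2 : segComps G y N = comps (segGraph G y) S := rfl
  rw [hred, hred2, card_comps, card_comps, hK₀]
  exact key_lemma (segGraph G y) S C K₀ (hK₀ ▸ hCA)
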